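/- arXiv:hep-th/9309159 — 3 statements merged into one kernel-verified Lean document; each statement's English description precedes it below -/
import Mathlib

section
/- Let L(0) and L(-1) be elements of an associative Q-algebra with [L(0), L(-1)] = L(-1). Then the formal-power-series derivative in x of the product (1-x)^{L(0) - zL(-1)} · (1-x)^{-L(0)} · e^{-zxL(-1)} is zero; consequently this product equals 1. -/
/-- Formal exponential `exp f = ∑ₖ fᵏ/k!`, defined coefficientwise (well-defined
for `f` with zero constant term). -/
noncomputable def psExp (K : Type*) [Field K] [CharZero K] {A : Type*} [Ring A] [Algebra K A]
    (f : PowerSeries A) : PowerSeries A :=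
  PowerSeries.mk fun n => ∑ k ∈ Finset.range (n + 1),
    ((k.factorial : K))⁻¹ • (PowerSeries.coeff n (f ^ k))

/-- The formal power series `log (1 - x) = -∑_{n ≥ 1} xⁿ/n`. -/
noncomputable def psLogOneSub (K : Type*) [Field K] [CharZero K] {A : Type*} [Ring A]
    [Algebra K A] : PowerSeries A :=
  PowerSeries.mk fun n => if n = 0 then 0 else -(((n : K))⁻¹ • (1 : A))

/-- `(1-x)^a := exp (a · log (1-x))`. -/
noncomputable def oneSubXPow (K : Type*) [Field K] [CharZero K] {A : Type*} [Ring A]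
    [Algebra K A] (a : A) : PowerSeries A :=
  psExp K (PowerSeries.C a * psLogOneSub K)

/-- Coefficientwise formal derivative `d/dx` of a power series over a
(possibly noncommutative) ring. -/
noncomputable def psDeriv {A : Type*} [Ring A] (f : PowerSeries A) : PowerSeries A :=
  PowerSeries.mk fun n => (n + 1) • (PowerSeries.coeff (n + 1) f)

/-!
Write `P = (1-x)^{L(0) - z L(-1)}`, `Q = (1-x)^{-L(0)}` and `E = e^{-z x L(-1)}`, so that
`P' = -P (L(0) - z L(-1)) (1-x)⁻¹`, `Q' = Q L(0) (1-x)⁻¹` and `E' = -z L(-1) E`.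
The relation `[L(0), L(-1)] = L(-1)` gives `L(-1) Q = (1-x) Q L(-1)`, because both sides solve
the same linear differential equation `F' = (1-x)⁻¹ (L(0) - 1) F` with the same constant term.
Hence `(L(0) - z L(-1)) (1-x)⁻¹ Q = Q L(0) (1-x)⁻¹ - z Q L(-1)`, and the three terms of the
Leibniz rule for `(P Q E)'` cancel. A series with vanishing derivative is its constant term,
here `1`; this is again uniqueness for a linear differential equation, which needs
characteristic `0`.
-/

open PowerSeries Finset

section Derivative

variable {A : Type*} [Ring A]

@[simp]
lemma coeff_psDeriv (f : A⟦X⟧) (n : ℕ) : coeff n (psDeriv f) = (n + 1) • coeff (n + 1) f :=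
  coeff_mk _ _

@[simp]
lemma psDeriv_sub (f g : A⟦X⟧) : psDeriv (f - g) = psDeriv f - psDeriv g := by
  ext n
  simp [smul_sub]

lemma psDeriv_sum {ι : Type*} (s : Finset ι) (f : ι → A⟦X⟧) :
    psDeriv (∑ i ∈ s, f i) = ∑ i ∈ s, psDeriv (f i) := by
  ext n
  simp [map_sum, smul_sum]

lemma psDeriv_smul {R : Type*} [Semiring R] [Module R A] [SMulCommClass R A A]
    (c : R) (f : A⟦X⟧) : psDeriv (c • f) = c • psDeriv f := by
  ext n
  simp [coeff_smul, smul_comm]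

@[simp]
lemma psDeriv_C (a : A) : psDeriv (C a) = 0 := by
  ext n
  simp

@[simp]
lemma psDeriv_one : psDeriv (1 : A⟦X⟧) = 0 := by
  simpa using psDeriv_C (1 : A)

@[simp]
lemma psDeriv_X : psDeriv (X : A⟦X⟧) = 1 := by
  ext n
  cases n <;> simp [coeff_X, coeff_one]

lemma psDeriv_mul (f g : A⟦X⟧) : psDeriv (f * g) = psDeriv f * g + f * psDeriv g := by
  ext n
  have hsplit : (n + 1) • coeff (n + 1) (f * g) = ∑ p ∈ antidiagonal (n + 1),
      (p.1 • (coeff p.1 f * coeff p.2 g) + p.2 • (coeff p.1 f * coeff p.2 g)) := by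
    rw [coeff_mul, smul_sum]
    refine sum_congr rfl fun p hp => ?_
    rw [← add_smul, mem_antidiagonal.mp hp]
  rw [coeff_psDeriv, hsplit, sum_add_distrib, Nat.sum_antidiagonal_succ,
    Nat.sum_antidiagonal_succ', map_add, coeff_mul, coeff_mul]
  simp only [coeff_psDeriv, smul_mul_assoc, mul_smul_comm, zero_smul, zero_add]

lemma psDeriv_C_mul (a : A) (f : A⟦X⟧) : psDeriv (C a * f) = C a * psDeriv f := by
  simp [psDeriv_mul]

lemma psDeriv_pow_succ {f : A⟦X⟧} (hc : Commute f (psDeriv f)) (k : ℕ) :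
    psDeriv (f ^ (k + 1)) = (k + 1) • (f ^ k * psDeriv f) := by
  induction k with
  | zero => simp
  | succ k ih =>
    rw [pow_succ, psDeriv_mul, ih, smul_mul_assoc, mul_assoc, ← hc.eq, ← mul_assoc, ← pow_succ,
      ← succ_nsmul]

lemma coeff_mul_eq_of_coeff_eq {f g : A⟦X⟧} (h : A⟦X⟧) {n : ℕ}
    (hfg : ∀ i ≤ n, coeff i f = coeff i g) : coeff n (f * h) = coeff n (g * h) := by
  simp only [coeff_mul]
  exact sum_congr rfl fun p hp =>
    by rw [hfg p.1 (Finset.HasAntidiagonal.antidiagonal.fst_le hp)]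

lemma eq_of_psDeriv_eq_mul [IsAddTorsionFree A] {h f g : A⟦X⟧} (hf : psDeriv f = h * f)
    (hg : psDeriv g = h * g) (h0 : constantCoeff f = constantCoeff g) : f = g := by
  ext n
  induction n using Nat.strong_induction_on with
  | _ n ih =>
    cases n with
    | zero => simpa using h0
    | succ n =>
      refine nsmul_right_injective n.succ_ne_zero ?_
      calc (n + 1) • coeff (n + 1) f = coeff n (h * f) := by rw [← hf, coeff_psDeriv]
        _ = coeff n (h * g) := by
          simp only [coeff_mul]
          exact sum_congr rfl fun p hp => by rw [ih p.2 (Nat.antidiagonal.snd_lt hp)]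
        _ = (n + 1) • coeff (n + 1) g := by rw [← hg, coeff_psDeriv]

end Derivative

section Commute

variable {A : Type*} [Ring A]

lemma commute_of_forall_coeff_commute {f g : A⟦X⟧}
    (h : ∀ i j, Commute (coeff i f) (coeff j g)) : Commute f g := by
  simp only [Commute, SemiconjBy, PowerSeries.ext_iff, coeff_mul]
  intro n
  rw [← Nat.sum_antidiagonal_swap]
  exact sum_congr rfl fun p _ => (h p.2 p.1).eq

lemma commute_C_iff {b : A} {f : A⟦X⟧} : Commute (C b) f ↔ ∀ n, Commute b (coeff n f) := by
  simp only [Commute, SemiconjBy, PowerSeries.ext_iff, coeff_C_mul, coeff_mul_C]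

lemma commute_one_sub_X (f : A⟦X⟧) : Commute (1 - X) f :=
  (Commute.one_left f).sub_left (commute_X f).symm

lemma commute_invUnitsSub_one (f : A⟦X⟧) : Commute (invUnitsSub (1 : Aˣ)) f :=
  commute_of_forall_coeff_commute fun i j => by simp

lemma invUnitsSub_one_mul_one_sub_X : invUnitsSub (1 : Aˣ) * (1 - X) = 1 := by
  simpa using invUnitsSub_mul_sub (1 : Aˣ)

lemma one_sub_X_mul_mul_invUnitsSub_one (f : A⟦X⟧) : (1 - X) * (f * invUnitsSub 1) = f := by
  rw [← mul_assoc, (commute_one_sub_X f).eq, mul_assoc, ← (commute_invUnitsSub_one _).eq,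
    invUnitsSub_one_mul_one_sub_X, mul_one]

end Commute

section Exp

variable {K : Type*} [Field K] [CharZero K] {A : Type*} [Ring A] [Algebra K A]

@[simp]
lemma constantCoeff_psExp (f : A⟦X⟧) : constantCoeff (psExp K f) = 1 := by
  rw [← coeff_zero_eq_constantCoeff_apply]
  simp [psExp]

lemma Commute.C_psExp {b : A} {f : A⟦X⟧} (h : Commute (C b) f) :
    Commute (C b) (psExp K f) := by
  refine commute_C_iff.2 fun n => ?_
  simp only [psExp, coeff_mk]
  exact Commute.sum_right _ _ _ fun k _ => (commute_C_iff.1 (h.pow_right k) n).smul_right _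

variable (K) in
noncomputable def psExpPartialSum (f : A⟦X⟧) (N : ℕ) : A⟦X⟧ :=
  ∑ k ∈ range N, ((k.factorial : K))⁻¹ • f ^ k

lemma coeff_psExp_eq_coeff_psExpPartialSum {f : A⟦X⟧} (hf : constantCoeff f = 0) {n N : ℕ}
    (hn : n < N) : coeff n (psExp K f) = coeff n (psExpPartialSum K f N) := by
  simp only [psExp, psExpPartialSum, coeff_mk, map_sum, coeff_smul]
  refine sum_subset (range_subset_range.2 hn) fun k _ hk => ?_
  have hnk : (n : ℕ∞) < k := by exact_mod_cast not_lt.1 (mt mem_range.2 hk)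
  rw [coeff_of_lt_order n (hnk.trans_le (le_order_pow_of_constantCoeff_eq_zero k hf)), smul_zero]

lemma psDeriv_psExpPartialSum_succ {f : A⟦X⟧} (hc : Commute f (psDeriv f)) (N : ℕ) :
    psDeriv (psExpPartialSum K f (N + 1)) = psExpPartialSum K f N * psDeriv f := by
  rw [psExpPartialSum, psDeriv_sum, sum_range_succ', psExpPartialSum, sum_mul]
  simp only [psDeriv_smul, pow_zero, psDeriv_one, smul_zero, add_zero, psDeriv_pow_succ hc]
  refine sum_congr rfl fun k _ => ?_
  rw [← Nat.cast_smul_eq_nsmul K, smul_smul, smul_mul_assoc, Nat.factorial_succ]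
  congr 1
  push_cast
  field_simp

lemma psDeriv_psExp {f : A⟦X⟧} (hf : constantCoeff f = 0) (hc : Commute f (psDeriv f)) :
    psDeriv (psExp K f) = psExp K f * psDeriv f := by
  ext n
  rw [coeff_psDeriv, coeff_psExp_eq_coeff_psExpPartialSum hf (Nat.lt_succ_self (n + 1)),
    ← coeff_psDeriv, psDeriv_psExpPartialSum_succ hc]
  exact coeff_mul_eq_of_coeff_eq _ fun i hi =>
    (coeff_psExp_eq_coeff_psExpPartialSum hf (Nat.lt_succ_of_le hi)).symm

lemma psDeriv_psExp_C_mul_X (b : A) :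
    psDeriv (psExp K (C b * X)) = psExp K (C b * X) * C b := by
  have hb : psDeriv (C b * X) = C b := by simp [psDeriv_C_mul]
  rw [psDeriv_psExp (by simp) (by rw [hb]; exact (Commute.refl _).mul_left (commute_X _).symm),
    hb]

end Exp

section OneSubXPow

variable {K : Type*} [Field K] [CharZero K] {A : Type*} [Ring A] [Algebra K A]

lemma commute_psLogOneSub (f : A⟦X⟧) : Commute (psLogOneSub K) f := by
  refine commute_of_forall_coeff_commute fun i j => ?_
  simp only [psLogOneSub, coeff_mk]
  split_ifs
  · exact Commute.zero_left _
  · exact ((Commute.one_left _).smul_left _).neg_left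

lemma psDeriv_psLogOneSub : psDeriv (psLogOneSub K : A⟦X⟧) = -invUnitsSub 1 := by
  ext n
  simp only [psLogOneSub, coeff_psDeriv, coeff_mk, coeff_invUnitsSub, map_neg]
  rw [if_neg n.succ_ne_zero, ← Nat.cast_smul_eq_nsmul K, smul_neg, smul_smul,
    mul_inv_cancel₀ (Nat.cast_ne_zero.2 n.succ_ne_zero)]
  simp

lemma psDeriv_oneSubXPow (a : A) :
    psDeriv (oneSubXPow K a) = -(oneSubXPow K a * C a * invUnitsSub 1) := by
  have hc : Commute (C a * psLogOneSub K) (C a * -invUnitsSub (1 : Aˣ)) :=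
    ((Commute.refl _).mul_left (commute_psLogOneSub _)).mul_right
      (commute_invUnitsSub_one (C a * psLogOneSub K : A⟦X⟧)).neg_left.symm
  rw [oneSubXPow, psDeriv_psExp (by simp [← coeff_zero_eq_constantCoeff_apply, psLogOneSub])
    (by rwa [psDeriv_C_mul, psDeriv_psLogOneSub]), psDeriv_C_mul, psDeriv_psLogOneSub]
  noncomm_ring

@[simp]
lemma constantCoeff_oneSubXPow (a : A) : constantCoeff (oneSubXPow K a) = 1 :=
  constantCoeff_psExp _

lemma Commute.C_oneSubXPow {a b : A} (h : Commute b a) : Commute (C b) (oneSubXPow K a) :=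
  ((h.map C).mul_right (commute_psLogOneSub _).symm).C_psExp

lemma C_mul_oneSubXPow_neg {a b : A} (hab : a * b - b * a = b) :
    C b * oneSubXPow K (-a) = (1 - X) * (oneSubXPow K (-a) * C b) := by
  have := IsAddTorsionFree.of_isTorsionFree K A
  set Q := oneSubXPow K (-a)
  have hQ : psDeriv Q = Q * C a * invUnitsSub 1 := by
    rw [psDeriv_oneSubXPow, map_neg]
    noncomm_ring
  have hQa : C a * Q = Q * C a := (Commute.refl a).neg_right.C_oneSubXPow.eq
  have hba : C b * C a = (C a - 1) * C b := by
    rw [← map_mul, ← map_one C, ← map_sub, ← map_mul, sub_mul, one_mul,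
      sub_eq_iff_eq_add.1 hab, add_sub_cancel_left]
  refine eq_of_psDeriv_eq_mul (h := invUnitsSub 1 * (C a - 1)) ?_ ?_ (by simp [Q])
  · calc psDeriv (C b * Q) = C b * C a * Q * invUnitsSub 1 := by
          rw [psDeriv_C_mul, hQ, ← hQa]
          noncomm_ring
      _ = invUnitsSub 1 * (C a - 1) * (C b * Q) := by
          rw [hba, mul_assoc (invUnitsSub 1), (commute_invUnitsSub_one _).eq]
          noncomm_ring
  · calc psDeriv ((1 - X) * (Q * C b))
        = -(Q * C b) + (1 - X) * (Q * C a * C b * invUnitsSub 1) := by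
          rw [psDeriv_mul, psDeriv_mul, hQ, mul_assoc (Q * C a), (commute_invUnitsSub_one _).eq]
          simp only [psDeriv_sub, psDeriv_one, psDeriv_X, psDeriv_C, zero_sub, neg_mul,
            one_mul, mul_zero, add_zero, ← mul_assoc]
      _ = (C a - 1) * (Q * C b) := by
          rw [one_sub_X_mul_mul_invUnitsSub_one, ← hQa]
          noncomm_ring
      _ = invUnitsSub 1 * (C a - 1) * ((1 - X) * (Q * C b)) := by
          rw [(commute_invUnitsSub_one _).eq, mul_assoc, ← mul_assoc (invUnitsSub 1),
            invUnitsSub_one_mul_one_sub_X, one_mul]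

lemma C_sub_mul_invUnitsSub_one_mul_oneSubXPow_neg {a b z : A} (hz : ∀ x : A, Commute z x)
    (hab : a * b - b * a = b) :
    C (a - z * b) * invUnitsSub 1 * oneSubXPow K (-a)
      = oneSubXPow K (-a) * (C a * invUnitsSub 1 - C (z * b)) := by
  set Q := oneSubXPow K (-a)
  have hzC : ∀ f : A⟦X⟧, Commute (C z) f := fun f => commute_C_iff.2 fun _ => hz _
  calc C (a - z * b) * invUnitsSub 1 * Q
      = (C a * Q - C z * (C b * Q)) * invUnitsSub 1 := by
        rw [mul_assoc, (commute_invUnitsSub_one Q).eq, map_sub, map_mul]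
        noncomm_ring
    _ = (Q * C a - C z * ((1 - X) * (Q * C b))) * invUnitsSub 1 := by
        rw [(Commute.refl a).neg_right.C_oneSubXPow.eq, C_mul_oneSubXPow_neg hab]
    _ = Q * C a * invUnitsSub 1 - (1 - X) * (C z * (Q * C b) * invUnitsSub 1) := by
        rw [(hzC (1 - X)).left_comm]
        noncomm_ring
    _ = Q * (C a * invUnitsSub 1 - C (z * b)) := by
        rw [one_sub_X_mul_mul_invUnitsSub_one, (hzC Q).left_comm, map_mul]
        noncomm_ring

end OneSubXPow

theorem deriv_oneSubXPow_product_eq_zero_general {A : Type*} [Ring A] [Algebra ℚ A]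
    (z : A) (hzc : ∀ a : A, Commute z a) (L0 Lm1 : A)
    (hcomm : L0 * Lm1 - Lm1 * L0 = Lm1) :
    psDeriv (oneSubXPow ℚ (L0 - z * Lm1) * oneSubXPow ℚ (-L0) *
        psExp ℚ (PowerSeries.C (-(z * Lm1)) * PowerSeries.X)) = 0 ∧
    oneSubXPow ℚ (L0 - z * Lm1) * oneSubXPow ℚ (-L0) *
        psExp ℚ (PowerSeries.C (-(z * Lm1)) * PowerSeries.X) = 1 := by
  have := IsAddTorsionFree.of_module_rat A
  set P := oneSubXPow ℚ (L0 - z * Lm1)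
  set Q := oneSubXPow ℚ (-L0)
  set E := psExp ℚ (C (-(z * Lm1)) * X)
  have hP : psDeriv P = -(P * C (L0 - z * Lm1) * invUnitsSub 1) := psDeriv_oneSubXPow _
  have hQ : psDeriv Q = Q * C L0 * invUnitsSub 1 := by
    rw [psDeriv_oneSubXPow, map_neg]
    noncomm_ring
  have hE : psDeriv E = C (-(z * Lm1)) * E := by
    rw [psDeriv_psExp_C_mul_X, ((Commute.refl _).mul_right (commute_X _)).C_psExp.eq]
  have hderiv : psDeriv (P * Q * E) = 0 := by
    rw [psDeriv_mul, psDeriv_mul, hP, hQ, hE, map_neg]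
    calc _ = -(P * (C (L0 - z * Lm1) * invUnitsSub 1 * Q)) * E
          + P * (Q * C L0 * invUnitsSub 1) * E - P * Q * (C (z * Lm1) * E) := by noncomm_ring
      _ = 0 := by
          rw [C_sub_mul_invUnitsSub_one_mul_oneSubXPow_neg hzc hcomm]
          noncomm_ring
  exact ⟨hderiv, eq_of_psDeriv_eq_mul (h := 0) (by simpa) (by simp) (by simp [P, Q, E])⟩

/-- Let `L(0), L(-1)` be elements of an associative `ℚ`-algebra with
`[L(0), L(-1)] = L(-1)`, and `z` a central invertible scalar.  Then the formal
derivative in `x` of `(1-x)^{L(0) - z·L(-1)} · (1-x)^{-L(0)} · e^{-z·x·L(-1)}` is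
zero; consequently this product equals `1`. -/
theorem deriv_oneSubXPow_product_eq_zero {A : Type*} [Ring A] [Algebra ℚ A]
    (z : A) (hzu : IsUnit z) (hzc : ∀ a : A, Commute z a) (L0 Lm1 : A)
    (hcomm : L0 * Lm1 - Lm1 * L0 = Lm1) :
    psDeriv (oneSubXPow ℚ (L0 - z * Lm1) * oneSubXPow ℚ (-L0) *
        psExp ℚ (PowerSeries.C (-(z * Lm1)) * PowerSeries.X)) = 0 ∧
    oneSubXPow ℚ (L0 - z * Lm1) * oneSubXPow ℚ (-L0) *
        psExp ℚ (PowerSeries.C (-(z * Lm1)) * PowerSeries.X) = 1 :=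
  deriv_oneSubXPow_product_eq_zero_general z hzc L0 Lm1 hcomm
end

section
/- Formal δ-function identity: in the space of formal Laurent series in commuting variables x_0, x_1, x_2, y_1, y_2, z, one has x_1^{-1} δ((y_1-z)/x_1) · x_2^{-1} δ((y_2-z)/x_2) · y_2^{-1} δ((y_1-x_0)/y_2) = y_1^{-1} δ((x_1+z)/y_1) · x_2^{-1} δ((y_2-z)/x_2) · x_2^{-1} δ((x_1-x_0)/x_2), where δ(x) = ∑_{n∈Z} x^n and binomial expressions (a±b)^n for n∈Z are expanded in nonnegative powers of the second summand. -/
/-- Generalized binomial coefficient `C(a, k) = a(a-1)⋯(a-k+1)/k!` for `a ∈ ℤ`. -/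
noncomputable def gchoose (a : ℤ) (k : ℕ) : ℚ :=
  (∏ i ∈ Finset.range k, ((a : ℚ) - i)) / k.factorial

/-- Coefficient of `u^p v^q` in `(u + s·v)^n` (`n ∈ ℤ`), expanded in nonnegative
powers of `v`. -/
noncomputable def expCoeff (n p q : ℤ) (s : ℚ) : ℚ :=
  if 0 ≤ q ∧ p = n - q then gchoose n q.toNat * s ^ q.toNat else 0

/-!
Once the exponents forced by each binomial are solved for, both sides are sums over the ways
`i + j = g` of splitting the exponent of `z` between the two factors containing `z`. By upper
negation `C(k - 1 - x, k) = (-1)^k C(x, k)` they become `(-1)^g T(a, b, c; g, e₀)` and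
`T(c, d, a; g, e₀)`, where `a, b, c, d = -e₁-1, -e₂-1, -f₁-1, -f₂-1` and `T(a, b, c; G, E)` is the
coefficient of `s^G t^E` in `(1 + s + t)^a (1 + s)^b (1 + t)^c`. Expanding `(1 + s + t)^a` in
powers of `t` instead of `s` gives `T(a, b, c; G, E) = T(a, c, b; E, G)`, and in that form one more
upper negation, using the homogeneity `a + b + c + d + 1 = e₀ + g`, turns `(-1)^g T(a, c, b; e₀, g)`
into `T(c, a, d; e₀, g)`.
-/

open Finset

namespace Ring

variable {R : Type*} [CommRing R] [BinomialRing R]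

theorem choose_natCast_sub_one_sub (x : R) (k : ℕ) :
    choose ((k : R) - 1 - x) k = (-1) ^ k * choose x k := by
  have h := choose_neg (x - k + 1) k
  rw [show x - k + 1 + k - 1 = x by abel, show -(x - k + 1) = (k : R) - 1 - x by abel] at h
  rw [h, Units.smul_def, Int.coe_negOnePow_natCast, zsmul_eq_mul]
  push_cast; rfl

theorem choose_mul_choose_sub_comm (a : R) (i l : ℕ) :
    choose a i * choose (a - i) l = choose a l * choose (a - l) i := by
  have hi := choose_smul_choose a (Nat.le_add_right i l)
  have hl := choose_smul_choose a (Nat.le_add_left l i)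
  rw [Nat.add_sub_cancel_left] at hi
  rw [Nat.add_sub_cancel] at hl
  rw [← hi, ← hl, Nat.choose_symm_add]

end Ring

open Ring

section Trinomial

variable {R : Type*} [CommRing R] [BinomialRing R]

/-- The coefficient of `s ^ G * t ^ E` in `(1 + s + t) ^ a * (1 + s) ^ b * (1 + t) ^ c`. -/
def trinomialCoeff (a b c : R) (G E : ℕ) : R :=
  ∑ p ∈ antidiagonal G, choose a p.1 * choose b p.2 * choose (a - p.1 + c) E

theorem trinomialCoeff_eq_sum_sum (a b c : R) (G E : ℕ) :
    trinomialCoeff a b c G E = ∑ p ∈ antidiagonal G, ∑ q ∈ antidiagonal E,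
      choose a p.1 * choose (a - p.1) q.1 * choose b p.2 * choose c q.2 := by
  refine sum_congr rfl fun p _ => ?_
  rw [add_choose_eq E (Commute.all _ _), mul_sum]
  exact sum_congr rfl fun q _ => by ring

theorem trinomialCoeff_comm (a b c : R) (G E : ℕ) :
    trinomialCoeff a b c G E = trinomialCoeff a c b E G := by
  rw [trinomialCoeff_eq_sum_sum, trinomialCoeff_eq_sum_sum, sum_comm]
  refine sum_congr rfl fun q _ => sum_congr rfl fun p _ => ?_
  rw [choose_mul_choose_sub_comm a p.1 q.1]
  ring

theorem neg_one_pow_mul_trinomialCoeff {a b c d : R} {G E : ℕ} (h : a + b + c + d + 1 = E + G) :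
    (-1) ^ G * trinomialCoeff a b c G E = trinomialCoeff c d a G E := by
  rw [trinomialCoeff_comm, trinomialCoeff, mul_sum, trinomialCoeff_comm, trinomialCoeff,
    ← Nat.sum_antidiagonal_swap]
  refine sum_congr rfl fun q hmem => ?_
  have hq : (q.1 : R) + q.2 = E := by rw [← Nat.cast_add, mem_antidiagonal.mp hmem]
  have hneg : (G : R) - 1 - (a - q.2 + b) = c - q.1 + d := by
    linear_combination (-1 : R) * h + hq
  rw [Prod.fst_swap, Prod.snd_swap, ← hneg, choose_natCast_sub_one_sub]
  ring

end Trinomial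

open Polynomial in
theorem gchoose_eq_choose (a : ℤ) (k : ℕ) : gchoose a k = Ring.choose (a : ℚ) k := by
  rw [Ring.choose_eq_smul, ← aeval_eq_smeval, aeval_def, eval₂_eq_eval_map, descPochhammer_map,
    descPochhammer_eval_eq_prod_range, gchoose, smul_eq_mul, div_eq_inv_mul]

theorem expCoeff_of_ne {n p q : ℤ} (s : ℚ) (h : p + q ≠ n) : expCoeff n p q s = 0 :=
  if_neg (by omega)

theorem expCoeff_of_neg {n p q : ℤ} (s : ℚ) (h : q < 0) : expCoeff n p q s = 0 :=
  if_neg (by omega)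

theorem expCoeff_of_add_eq {n p : ℤ} {k : ℕ} (s : ℚ) (h : p + k = n) :
    expCoeff n p k s = Ring.choose (n : ℚ) k * s ^ k := by
  rw [expCoeff, if_pos ⟨k.cast_nonneg, by omega⟩, Int.toNat_natCast, gchoose_eq_choose]

theorem expCoeff_neg_one_of_add_eq {n p : ℤ} {k : ℕ} (h : p + k = n) :
    expCoeff n p k (-1) = Ring.choose (-(p : ℚ) - 1) k := by
  rw [expCoeff_of_add_eq _ h, mul_comm, ← choose_natCast_sub_one_sub, ← h]
  push_cast
  ring_nf

theorem finsum_expCoeff_mul_fst (n q : ℤ) (s : ℚ) (f : ℤ → ℚ) :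
    ∑ᶠ p, expCoeff n p q s * f p = expCoeff n (n - q) q s * f (n - q) :=
  finsum_eq_single _ _ fun _ hp => by rw [expCoeff_of_ne s (by omega), zero_mul]

theorem finsum_expCoeff_mul_snd (n p : ℤ) (s : ℚ) (f : ℤ → ℚ) :
    ∑ᶠ q, expCoeff n p q s * f q = expCoeff n p (n - p) s * f (n - p) :=
  finsum_eq_single _ _ fun _ hq => by rw [expCoeff_of_ne s (by omega), zero_mul]

theorem finsum_expCoeff_neg_sub_one_mul (p q : ℤ) (s : ℚ) (f : ℤ → ℚ) :
    ∑ᶠ a, expCoeff (-a - 1) p q s * f a = expCoeff (p + q) p q s * f (-(p + q) - 1) := by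
  rw [finsum_eq_single _ (-(p + q) - 1) fun _ ha => by rw [expCoeff_of_ne s (by omega), zero_mul],
    show -(-(p + q) - 1) - 1 = p + q by ring]

theorem finsum_eq_sum_antidiagonal {M : Type*} [AddCommMonoid M] (f : ℤ → ℤ → M)
    (hf : ∀ i j, i < 0 ∨ j < 0 → f i j = 0) (G : ℕ) :
    ∑ᶠ i : ℤ, f i (G - i) = ∑ p ∈ antidiagonal G, f p.1 p.2 := by
  rw [Nat.sum_antidiagonal_eq_sum_range_succ (fun i j => f i j),
    finsum_eq_sum_of_support_subset (s := (range (G + 1)).map Nat.castEmbedding), sum_map]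
  · refine sum_congr rfl fun k hk => ?_
    rw [mem_range] at hk
    simp [Nat.cast_sub (by omega : k ≤ G)]
  · intro i hi
    have h0 : 0 ≤ i ∧ i ≤ G := by
      by_contra h
      exact hi (hf _ _ (by omega))
    simp only [coe_map, Set.mem_image, mem_coe, mem_range, Nat.castEmbedding_apply]
    exact ⟨i.toNat, by omega, by omega⟩

/-- The summand of the left side once the exponents of `y₁` and `y₂` have been solved for:
`i` and `j` are the exponents of `z` taken from `(y₁ - z)^(-e₁-1)` and `(y₂ - z)^(-e₂-1)`. -/
noncomputable def leftSummand (e0 e1 e2 f1 f2 i j : ℤ) : ℚ :=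
  expCoeff (-e1 - 1) (-e1 - 1 - i) i (-1) * (expCoeff (-e2 - 1) (-e2 - 1 - j) j (-1) *
    expCoeff (-(f2 - (-e2 - 1 - j)) - 1) (f1 - (-e1 - 1 - i)) e0 (-1))

/-- The summand of the right side once the exponents of `x₁` and `x₂` have been solved for:
`i` and `j` are the exponents of `z` taken from `(x₁ + z)^(-f₁-1)` and `(y₂ - z)^(f₂+j)`. -/
noncomputable def rightSummand (e0 e1 e2 f1 f2 i j : ℤ) : ℚ :=
  expCoeff (-f1 - 1) (-f1 - 1 - i) i 1 * (expCoeff (f2 + j) f2 j (-1) *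
    expCoeff (-(e2 - (-(f2 + j) - 1)) - 1) (e1 - (-f1 - 1 - i)) e0 (-1))

theorem finsum_eq_finsum_leftSummand (e0 e1 e2 f1 f2 g : ℤ) :
    ∑ᶠ (β1 : ℤ) (β2 : ℤ) (γ1 : ℤ), expCoeff (-e1 - 1) β1 γ1 (-1) *
        expCoeff (-e2 - 1) β2 (g - γ1) (-1) * expCoeff (-(f2 - β2) - 1) (f1 - β1) e0 (-1) =
      ∑ᶠ i, leftSummand e0 e1 e2 f1 f2 i (g - i) := by
  rw [← finsum_comp_equiv (Equiv.subLeft (-e1 - 1))]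
  simp only [Equiv.subLeft_apply, mul_assoc, finsum_expCoeff_mul_snd, sub_sub_cancel]
  simp only [mul_left_comm (expCoeff (-e1 - 1) _ _ _), finsum_expCoeff_mul_fst]
  exact finsum_congr fun _ => mul_left_comm _ _ _

theorem finsum_eq_finsum_rightSummand (e0 e1 e2 f1 f2 g : ℤ) :
    ∑ᶠ (α : ℤ) (a : ℤ) (γ : ℤ), expCoeff (-f1 - 1) α γ 1 * expCoeff (-a - 1) f2 (g - γ) (-1) *
        expCoeff (-(e2 - a) - 1) (e1 - α) e0 (-1) =
      ∑ᶠ i, rightSummand e0 e1 e2 f1 f2 i (g - i) := by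
  rw [← finsum_comp_equiv (Equiv.subLeft (-f1 - 1))]
  simp only [Equiv.subLeft_apply, mul_assoc, finsum_expCoeff_mul_snd, sub_sub_cancel]
  simp only [mul_left_comm (expCoeff (-f1 - 1) _ _ _), finsum_expCoeff_neg_sub_one_mul]
  exact finsum_congr fun _ => mul_left_comm _ _ _

theorem leftSummand_eq_zero {e0 e1 e2 f1 f2 i j : ℤ}
    (h : i < 0 ∨ j < 0 ∨ e0 < 0 ∨ e0 + e1 + e2 + f1 + f2 + i + j + 3 ≠ 0) :
    leftSummand e0 e1 e2 f1 f2 i j = 0 := by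
  rcases h with h | h | h | h
  · rw [leftSummand, expCoeff_of_neg _ h, zero_mul]
  · rw [leftSummand, expCoeff_of_neg _ h, zero_mul, mul_zero]
  · rw [leftSummand, expCoeff_of_neg _ h, mul_zero, mul_zero]
  · rw [leftSummand, expCoeff_of_ne (p := f1 - (-e1 - 1 - i)) _ (by omega), mul_zero, mul_zero]

theorem rightSummand_eq_zero {e0 e1 e2 f1 f2 i j : ℤ}
    (h : i < 0 ∨ j < 0 ∨ e0 < 0 ∨ e0 + e1 + e2 + f1 + f2 + i + j + 3 ≠ 0) :
    rightSummand e0 e1 e2 f1 f2 i j = 0 := by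
  rcases h with h | h | h | h
  · rw [rightSummand, expCoeff_of_neg _ h, zero_mul]
  · rw [rightSummand, expCoeff_of_neg _ h, zero_mul, mul_zero]
  · rw [rightSummand, expCoeff_of_neg _ h, mul_zero, mul_zero]
  · rw [rightSummand, expCoeff_of_ne (p := e1 - (-f1 - 1 - i)) _ (by omega), mul_zero, mul_zero]

theorem leftSummand_natCast {e1 e2 f1 f2 : ℤ} {E i j : ℕ}
    (h : (E : ℤ) + e1 + e2 + f1 + f2 + i + j + 3 = 0) :
    leftSummand E e1 e2 f1 f2 i j = (-1) ^ (i + j) * (choose (-(e1 : ℚ) - 1) i *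
      choose (-(e2 : ℚ) - 1) j * choose (-(e1 : ℚ) - 1 - i + (-(f1 : ℚ) - 1)) E) := by
  rw [leftSummand, expCoeff_of_add_eq _ (by ring), expCoeff_of_add_eq _ (by ring),
    expCoeff_neg_one_of_add_eq (by omega)]
  push_cast
  ring_nf

theorem rightSummand_natCast {e1 e2 f1 f2 : ℤ} {E i j : ℕ}
    (h : (E : ℤ) + e1 + e2 + f1 + f2 + i + j + 3 = 0) :
    rightSummand E e1 e2 f1 f2 i j = choose (-(f1 : ℚ) - 1) i *
      choose (-(f2 : ℚ) - 1) j * choose (-(f1 : ℚ) - 1 - i + (-(e1 : ℚ) - 1)) E := by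
  rw [rightSummand, expCoeff_of_add_eq _ (by ring), expCoeff_neg_one_of_add_eq rfl,
    expCoeff_neg_one_of_add_eq (by omega)]
  push_cast
  ring_nf

/-- Formal δ-function identity
`x₁⁻¹ δ((y₁-z)/x₁) · x₂⁻¹ δ((y₂-z)/x₂) · y₂⁻¹ δ((y₁-x₀)/y₂)
 = y₁⁻¹ δ((x₁+z)/y₁) · x₂⁻¹ δ((y₂-z)/x₂) · x₂⁻¹ δ((x₁-x₀)/x₂)`,
where `δ(x) = ∑_{n∈ℤ} xⁿ` and binomials `(a±b)ⁿ` (`n ∈ ℤ`) are expanded in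
nonnegative powers of the second summand.  Stated coefficientwise: for each
monomial `x₀^{e₀} x₁^{e₁} x₂^{e₂} y₁^{f₁} y₂^{f₂} z^{g}`, the coefficients of the
two sides (each a convolution over the exponents of the shared variables)
coincide. -/
theorem delta_three_factor_identity_I :
    ∀ e0 e1 e2 f1 f2 g : ℤ,
      (∑ᶠ (β1 : ℤ) (β2 : ℤ) (γ1 : ℤ),
        expCoeff (-e1 - 1) β1 γ1 (-1) * expCoeff (-e2 - 1) β2 (g - γ1) (-1) *
          expCoeff (-(f2 - β2) - 1) (f1 - β1) e0 (-1))
      = ∑ᶠ (α : ℤ) (a : ℤ) (γ : ℤ),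
          expCoeff (-f1 - 1) α γ 1 * expCoeff (-a - 1) f2 (g - γ) (-1) *
            expCoeff (-(e2 - a) - 1) (e1 - α) e0 (-1) := by
  intro e0 e1 e2 f1 f2 g
  rw [finsum_eq_finsum_leftSummand, finsum_eq_finsum_rightSummand]
  by_cases h : 0 ≤ g ∧ 0 ≤ e0 ∧ e0 + e1 + e2 + f1 + f2 + g + 3 = 0
  · obtain ⟨hg, he0, hhom⟩ := h
    lift g to ℕ using hg with G
    lift e0 to ℕ using he0 with E
    have hsplit : ∀ p ∈ antidiagonal G, (E : ℤ) + e1 + e2 + f1 + f2 + p.1 + p.2 + 3 = 0 :=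
      fun p hmem => by have := mem_antidiagonal.mp hmem; omega
    rw [finsum_eq_sum_antidiagonal (leftSummand E e1 e2 f1 f2)
        (fun _ _ h => leftSummand_eq_zero (by omega)) G,
      finsum_eq_sum_antidiagonal (rightSummand E e1 e2 f1 f2)
        (fun _ _ h => rightSummand_eq_zero (by omega)) G]
    calc ∑ p ∈ antidiagonal G, leftSummand E e1 e2 f1 f2 p.1 p.2
        = (-1) ^ G * trinomialCoeff (-(e1 : ℚ) - 1) (-(e2 : ℚ) - 1) (-(f1 : ℚ) - 1) G E := by
          rw [trinomialCoeff, mul_sum]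
          refine sum_congr rfl fun p hmem => ?_
          rw [leftSummand_natCast (hsplit p hmem), mem_antidiagonal.mp hmem]
      _ = trinomialCoeff (-(f1 : ℚ) - 1) (-(f2 : ℚ) - 1) (-(e1 : ℚ) - 1) G E :=
          neg_one_pow_mul_trinomialCoeff (by qify at hhom; linarith)
      _ = ∑ p ∈ antidiagonal G, rightSummand E e1 e2 f1 f2 p.1 p.2 :=
          sum_congr rfl fun p hmem => (rightSummand_natCast (hsplit p hmem)).symm
  · rw [finsum_eq_zero_of_forall_eq_zero fun _ => leftSummand_eq_zero (by omega),
      finsum_eq_zero_of_forall_eq_zero fun _ => rightSummand_eq_zero (by omega)]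
end

section
/- Conjugation of module vertex operators by the Virasoro exponential: for v ∈ V acting on a module W₁, e^{x₂L(1)} e^{(2r+1)πi L(0)} x₂^{-2L(0)} Y₁(v, x₀) x₂^{2L(0)} e^{-(2r+1)πi L(0)} e^{-x₂L(1)} = Y₁(e^{(x₂+x₀)L(1)} (-(x₂+x₀)^{-2})^{L(0)} v, -x₀/((x₂+x₀)x₂)). -/
/-! With `M = q + 2p + 2h`, the left side is `(-1)^(h+p) / M!` times `(ad L(1))^M Y(v, -p-1)`
applied to `w`: this is the binomial expansion of `ad L(1)` as left minus right multiplication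
(the `x₂^M`-coefficient of `e^{x₂L(1)} A e^{-x₂L(1)}`). Each bracket `[L(1), Y(L(1)ᵏv, n)]` raises
either the mode `n` or the power `k`, so `(ad L(1))^N Y(v, n₀)` is a combination of the
`Y(L(1)^(N-m) v, n₀ + m)` whose coefficients `adL1Coeff (2h - n₀ - 1) N m` obey a Pascal-type
recurrence. For `N = M` and `n₀ = -p-1` they are signed generalized binomial coefficients of
`p + q`, which gives the right side. -/

open Finset

theorem Ring.lie_eq_mulLeft_sub_mulRight {R A : Type*} [CommRing R] [Ring A] [Algebra R A]
    (x y : A) : ⁅x, y⁆ = (LinearMap.mulLeft R x - LinearMap.mulRight R x) y := by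
  simp [Ring.lie_def]

theorem Ring.lie_iterate_eq_sum {R A : Type*} [CommRing R] [Ring A] [Algebra R A]
    (x y : A) (n : ℕ) :
    (⁅x, ·⁆)^[n] y =
      ∑ j ∈ range (n + 1), ((-1) ^ j * n.choose j : R) • (x ^ (n - j) * y * x ^ j) := by
  have hlie : (⁅x, ·⁆) = ⇑((-1 : R) • LinearMap.mulRight R x + LinearMap.mulLeft R x) := by
    ext z
    simp [Ring.lie_def, sub_eq_neg_add]
  rw [hlie, ← Module.End.coe_pow,
    ((LinearMap.commute_mulLeft_right (R := R) x x).symm.smul_left (-1 : R)).add_pow,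
    LinearMap.sum_apply]
  refine sum_congr rfl fun j _ => ?_
  rw [smul_pow, LinearMap.pow_mulLeft, LinearMap.pow_mulRight]
  simp [mul_assoc, mul_smul, ← Nat.cast_smul_eq_nsmul R]

theorem Ring.inv_factorial_smul_lie_iterate {K A : Type*} [Field K] [CharZero K] [Ring A]
    [Algebra K A] (x y : A) (n : ℕ) :
    (n.factorial : K)⁻¹ • (⁅x, ·⁆)^[n] y = ∑ j ∈ range (n + 1),
      ((((n - j).factorial * j.factorial : ℕ) : K)⁻¹ * (-1) ^ j) • (x ^ (n - j) * y * x ^ j) := by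
  rw [Ring.lie_iterate_eq_sum (R := K), smul_sum]
  refine sum_congr rfl fun j hj => ?_
  rw [smul_smul, Nat.cast_choose K (mem_range_succ_iff.mp hj)]
  congr 1
  have : (n.factorial : K) ≠ 0 := Nat.cast_ne_zero.mpr n.factorial_ne_zero
  field_simp
  push_cast
  ring

section adL1Coeff

variable {K : Type*} [CommRing K]

def adL1Coeff (a : K) (N m : ℕ) : K := N.choose m * ∏ i ∈ range m, (a - N + i)

@[simp] lemma adL1Coeff_zero_right (a : K) (N : ℕ) : adL1Coeff a N 0 = 1 := by
  simp [adL1Coeff]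

lemma adL1Coeff_of_lt (a : K) {N m : ℕ} (h : N < m) : adL1Coeff a N m = 0 := by
  simp [adL1Coeff, Nat.choose_eq_zero_of_lt h]

lemma adL1Coeff_succ_succ (a : K) (N m : ℕ) :
    adL1Coeff a (N + 1) (m + 1) =
      adL1Coeff a N (m + 1) + (a - 2 * N + m - 1) * adL1Coeff a N m := by
  rcases lt_or_ge N m with hNm | hmN
  · simp [adL1Coeff_of_lt a hNm, adL1Coeff_of_lt a (by omega : N + 1 < m + 1),
      adL1Coeff_of_lt a (by omega : N < m + 1)]
  set P := ∏ i ∈ range m, (a - N + i)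
  have hchoose : (N.choose (m + 1) : K) * (m + 1) = N.choose m * ((N : K) - m) := by
    rw [← Nat.cast_sub hmN]
    exact_mod_cast congrArg (Nat.cast : ℕ → K) (Nat.choose_succ_right_eq N m)
  have hprod_succ : ∏ i ∈ range (m + 1), (a - (N + 1 : ℕ) + i) = P * (a - N - 1) := by
    rw [prod_range_succ']
    congr 1
    · exact prod_congr rfl fun i _ => by push_cast; ring
    · push_cast; ring
  have hprod_succ' : ∏ i ∈ range (m + 1), (a - N + i) = P * (a - N + m) := prod_range_succ _ m
  simp only [adL1Coeff, hprod_succ, hprod_succ', Nat.choose_succ_succ']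
  push_cast
  linear_combination (-P) * hchoose

end adL1Coeff

lemma cast_gchoose {K : Type*} [Field K] [CharZero K] (b : ℤ) (m : ℕ) :
    (gchoose b m : K) = (∏ i ∈ range m, ((b : K) - i)) / m.factorial := by
  simp [gchoose]

lemma adL1Coeff_natCast_sub {K : Type*} [Field K] [CharZero K] (b : ℤ) {N m : ℕ} (hm : m ≤ N) :
    adL1Coeff ((N : K) - b) N m = (-1) ^ m * (N.factorial / (N - m).factorial) * gchoose b m := by
  have hprod : ∏ i ∈ range m, ((N : K) - b - N + i) = (-1) ^ m * ∏ i ∈ range m, ((b : K) - i) := by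
    calc _ = ∏ i ∈ range m, ((-1) * ((b : K) - i)) := prod_congr rfl fun i _ => by ring
      _ = _ := by rw [prod_mul_distrib, prod_const, card_range]
  rw [adL1Coeff, hprod, cast_gchoose, Nat.cast_choose K hm]
  field_simp

lemma neg_one_zpow_mul_inv_factorial_mul_adL1Coeff {h p q : ℤ} {M m : ℕ}
    (hM : q + 2 * p + 2 * h = M) (hm : m ≤ M) :
    (-1 : ℂ) ^ (h + p) * ((M.factorial : ℂ)⁻¹ * adL1Coeff (2 * (h : ℂ) - (-p - 1 : ℤ) - 1) M m) =
      ((M - m).factorial : ℂ)⁻¹ * ((-1) ^ (h + (-p - 1 + m) + 1) * gchoose (p + q) m) := by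
  have hweight : 2 * (h : ℂ) - ((-p - 1 : ℤ) : ℂ) - 1 = M - ((p + q : ℤ) : ℂ) := by
    have hMc := congrArg (Int.cast : ℤ → ℂ) hM
    push_cast at hMc ⊢
    linear_combination hMc
  have hsign : (-1 : ℂ) ^ (h + (-p - 1 + m) + 1) = (-1) ^ (h + p) * (-1) ^ m := by
    rw [show h + (-p - 1 + m) + 1 = h + p + m + 2 * (-p) by ring, zpow_add₀ (by norm_num),
      zpow_mul, zpow_add₀ (by norm_num), zpow_natCast]
    norm_num
  have : (M.factorial : ℂ) ≠ 0 := Nat.cast_ne_zero.mpr M.factorial_ne_zero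
  rw [hweight, adL1Coeff_natCast_sub _ hm, hsign]
  field_simp

theorem lie_iterate_vertexOperator_eq_sum {K V W : Type*} [CommRing K] [AddCommGroup V]
    [Module K V] [AddCommGroup W] [Module K W] (Y : V → ℤ → Module.End K W)
    (LV : Module.End K V) (LW : Module.End K W) (v : V) (h : K)
    (hbr : ∀ (k : ℕ) (n : ℤ), ⁅LW, Y ((LV ^ k) v) n⁆
      = (2 * (h - k) - n - 2) • Y ((LV ^ k) v) (n + 1) + Y ((LV ^ (k + 1)) v) n)
    (n₀ : ℤ) (N : ℕ) :
    (⁅LW, ·⁆)^[N] (Y v n₀) = ∑ m ∈ range (N + 1),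
      adL1Coeff (2 * h - n₀ - 1) N m • Y ((LV ^ (N - m)) v) (n₀ + m) := by
  set a : K := 2 * h - n₀ - 1
  induction N with
  | zero => simp
  | succ N ih =>
    have hshift : ∑ m ∈ range (N + 1), adL1Coeff a N m • Y ((LV ^ (N - m + 1)) v) (n₀ + m)
        = ∑ m ∈ range (N + 1), adL1Coeff a N (m + 1) • Y ((LV ^ (N - m)) v) (n₀ + m + 1)
          + Y ((LV ^ (N + 1)) v) n₀ := by
      calc _ = ∑ m ∈ range (N + 1 + 1), adL1Coeff a N m • Y ((LV ^ (N + 1 - m)) v) (n₀ + m) := by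
            rw [sum_range_succ _ (N + 1), adL1Coeff_of_lt a (lt_add_one N), zero_smul, add_zero]
            refine sum_congr rfl fun m hm => ?_
            rw [Nat.sub_add_comm (Nat.lt_succ_iff.mp (mem_range.mp hm))]
        _ = _ := by
            rw [sum_range_succ']
            push_cast
            simp [add_assoc]
    have hcoeff : ∀ m ∈ range (N + 1),
        (adL1Coeff a N m * (2 * (h - (N - m : ℕ)) - (n₀ + m : ℤ) - 2)) •
            Y ((LV ^ (N - m)) v) (n₀ + m + 1)
          = ((a - 2 * N + m - 1) * adL1Coeff a N m) • Y ((LV ^ (N - m)) v) (n₀ + m + 1) := by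
      intro m hm
      rw [Nat.cast_sub (Nat.lt_succ_iff.mp (mem_range.mp hm))]
      congr 1
      push_cast; ring
    rw [Function.iterate_succ_apply', ih, Ring.lie_eq_mulLeft_sub_mulRight (R := K), map_sum]
    simp only [map_smul, ← Ring.lie_eq_mulLeft_sub_mulRight, hbr, smul_add, sum_add_distrib,
      hshift]
    rw [sum_range_succ' _ (N + 1)]
    simp only [adL1Coeff_succ_succ, add_smul, sum_add_distrib, adL1Coeff_zero_right, one_smul,
      smul_smul, Nat.add_sub_add_right, Nat.sub_zero, Nat.cast_add, Nat.cast_one, Nat.cast_zero,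
      add_zero, ← add_assoc]
    rw [sum_congr rfl hcoeff]
    abel

theorem conj_module_vertex_operator_by_virasoro_general
    {V W1 : Type*} [AddCommGroup V] [Module ℂ V] [AddCommGroup W1] [Module ℂ W1]
    (Y1 : V → ℤ → Module.End ℂ W1) (L1V : Module.End ℂ V)
    (L1W : Module.End ℂ W1) (v : V) (h : ℤ)
    (hL1br : ∀ (k : ℕ) (n : ℤ), ⁅L1W, Y1 ((L1V ^ k) v) n⁆
      = (2 * ((h : ℂ) - k) - n - 2) • Y1 ((L1V ^ k) v) (n + 1) + Y1 ((L1V ^ (k + 1)) v) n)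
    (w : W1) :
    ∀ p q : ℤ,
      (if 0 ≤ q + 2 * p + 2 * h then
        ∑ j ∈ Finset.range ((q + 2 * p + 2 * h).toNat + 1),
          (((((q + 2 * p + 2 * h).toNat - j).factorial * j.factorial : ℕ) : ℂ))⁻¹ •
            (((-1 : ℂ) ^ j * (-1 : ℂ) ^ (h + p)) •
              (L1W ^ ((q + 2 * p + 2 * h).toNat - j)) ((Y1 v (-p - 1)) ((L1W ^ j) w)))
      else 0)
      = ∑ n ∈ Finset.Icc (-p - 1) (p + q + 2 * h - 1),
          ((((p + q + 2 * h - n - 1).toNat.factorial : ℕ) : ℂ))⁻¹ •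
            (((-1 : ℂ) ^ (h + n + 1) * ((gchoose (p + q) ((p + n + 1).toNat) : ℚ) : ℂ)) •
              (Y1 ((L1V ^ (p + q + 2 * h - n - 1).toNat) v) n) w) := by
  intro p q
  split_ifs with hpos
  swap
  · rw [Finset.Icc_eq_empty (by omega), sum_empty]
  obtain ⟨M, hM⟩ := Int.eq_ofNat_of_zero_le hpos
  calc _ = (-1 : ℂ) ^ (h + p) • ((M.factorial : ℂ)⁻¹ • (⁅L1W, ·⁆)^[M] (Y1 v (-p - 1))) w := by
        rw [hM, Int.toNat_natCast, Ring.inv_factorial_smul_lie_iterate, LinearMap.sum_apply,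
          smul_sum]
        refine sum_congr rfl fun j _ => ?_
        simp only [LinearMap.smul_apply, Module.End.mul_apply, smul_smul]
        congr 1
        ring
    _ = _ := by
        rw [lie_iterate_vertexOperator_eq_sum Y1 L1V L1W v h hL1br, smul_sum, LinearMap.sum_apply,
          smul_sum, Int.Icc_eq_finset_map, sum_map,
          show (p + q + 2 * h - 1 + 1 - (-p - 1)).toNat = M + 1 by omega]
        refine sum_congr rfl fun m hm => ?_
        have hmM := mem_range_succ_iff.mp hm
        simp only [Function.Embedding.trans_apply, Nat.castEmbedding_apply, addLeftEmbedding_apply]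
        rw [show (p + q + 2 * h - (-p - 1 + m) - 1).toNat = M - m by omega,
          show (p + (-p - 1 + m) + 1).toNat = m by omega]
        simp only [LinearMap.smul_apply, smul_smul]
        rw [neg_one_zpow_mul_inv_factorial_mul_adL1Coeff hM hmM]

/-- Conjugation of module vertex operators by the Virasoro exponentials
(formula (7.25)):  for `v ∈ V` homogeneous of weight `h ∈ ℤ` acting on a module
`W₁`,
`e^{x₂L(1)} e^{(2r+1)πi L(0)} x₂^{-2L(0)} Y₁(v,x₀) x₂^{2L(0)} e^{-(2r+1)πi L(0)} e^{-x₂L(1)}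
  = Y₁(e^{(x₂+x₀)L(1)} (-(x₂+x₀)^{-2})^{L(0)} v, -x₀/((x₂+x₀)x₂))`,
with `(x₂+x₀)^m` expanded in nonnegative powers of `x₀`.  Stated
coefficientwise at the monomial `x₀^p x₂^q`, applied to an `L(0)`-eigenvector
`w` of `W₁` of eigenvalue `μ` (the eigenvalue cancels, leaving integral powers).
Here `L1V` is `L(1)` on `V`, `L0W, L1W` are `L(0), L(1)` on `W₁`; the
hypotheses are the standard commutator formulas `[L(0), Y(u,x)]` and
`[L(1), Y(u,x)]` for the homogeneous vectors `u = L(1)ᵏv` (of weight `h-k`),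
and `[L(0), L(1)] = -L(1)`. -/
theorem conj_module_vertex_operator_by_virasoro
    {V W1 : Type*} [AddCommGroup V] [Module ℂ V] [AddCommGroup W1] [Module ℂ W1]
    (Y1 : V → ℤ → Module.End ℂ W1) (L1V : Module.End ℂ V)
    (L0W L1W : Module.End ℂ W1) (v : V) (h : ℤ) (r : ℤ)
    (hL0L1 : ⁅L0W, L1W⁆ = -L1W)
    (hL0br : ∀ (k : ℕ) (n : ℤ), ⁅L0W, Y1 ((L1V ^ k) v) n⁆
      = (((h : ℂ) - k) - n - 1) • Y1 ((L1V ^ k) v) n)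
    (hL1br : ∀ (k : ℕ) (n : ℤ), ⁅L1W, Y1 ((L1V ^ k) v) n⁆
      = (2 * ((h : ℂ) - k) - n - 2) • Y1 ((L1V ^ k) v) (n + 1) + Y1 ((L1V ^ (k + 1)) v) n)
    (μ : ℂ) (w : W1) (hw : L0W w = μ • w) :
    ∀ p q : ℤ,
      (if 0 ≤ q + 2 * p + 2 * h then
        ∑ j ∈ Finset.range ((q + 2 * p + 2 * h).toNat + 1),
          (((((q + 2 * p + 2 * h).toNat - j).factorial * j.factorial : ℕ) : ℂ))⁻¹ •
            (((-1 : ℂ) ^ j * (-1 : ℂ) ^ (h + p)) •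
              (L1W ^ ((q + 2 * p + 2 * h).toNat - j)) ((Y1 v (-p - 1)) ((L1W ^ j) w)))
      else 0)
      = ∑ n ∈ Finset.Icc (-p - 1) (p + q + 2 * h - 1),
          ((((p + q + 2 * h - n - 1).toNat.factorial : ℕ) : ℂ))⁻¹ •
            (((-1 : ℂ) ^ (h + n + 1) * ((gchoose (p + q) ((p + n + 1).toNat) : ℚ) : ℂ)) •
              (Y1 ((L1V ^ (p + q + 2 * h - n - 1).toNat) v) n) w) :=
  conj_module_vertex_operator_by_virasoro_general Y1 L1V L1W v h hL1br w
end
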